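/- arXiv:0809.4401 — 3 statements merged into one kernel-verified Lean document; each statement's English description precedes it below -/
import Mathlib

section
/- For every complex d×d matrix X, the Haar average of its unitary conjugations equals the completely depolarized operator: ∫_{U(d)} U X U† dU = (tr(X)/d) · I_d, where the integral is the Bochner integral with respect to the normalized Haar (probability) measure on U(d). -/
open MeasureTheory Matrix

noncomputable instance matNormedAddCommGroup {m n : Type*} [Fintype m] [Fintype n] :
    NormedAddCommGroup (Matrix m n ℂ) := Matrix.frobeniusNormedAddCommGroup
noncomputable instance matNormedSpace {m n : Type*} [Fintype m] [Fintype n] :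
    NormedSpace ℝ (Matrix m n ℂ) := Matrix.frobeniusNormedSpace

noncomputable instance {d : ℕ} :
    MeasurableSpace (Matrix.unitaryGroup (Fin d) ℂ) := borel _
instance {d : ℕ} : BorelSpace (Matrix.unitaryGroup (Fin d) ℂ) := ⟨rfl⟩

/-! The average `M = ∫ U X Uᴴ dU` is unchanged by conjugation with any unitary `V`, since
`V U` runs over `U(d)` with the same Haar measure as `U`; so `M` commutes with all unitaries.
These span all matrices (as in any unital C⋆-algebra), hence `M` is central, i.e. a scalar
`c • 1`, and `c = tr X / d` follows by comparing traces: `tr (U X Uᴴ) = tr X`. -/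

-- The Frobenius norm's topology is the product topology on matrices only up to unfolding,
-- which instance search does not do.
noncomputable instance matContinuousENorm {m n : Type*} [Fintype m] [Fintype n] :
    ContinuousENorm (Matrix m n ℂ) := SeminormedAddGroup.toContinuousENorm

namespace Matrix

variable {n : Type*} [Fintype n]

section Integral

variable {α : Type*} [MeasurableSpace α] {ν : Measure α} {f : α → Matrix n n ℂ}

theorem integral_mul_mul (hf : Integrable f ν) (A B : Matrix n n ℂ) :
    ∫ x, A * f x * B ∂ν = A * (∫ x, f x ∂ν) * B :=
  let conj : Matrix n n ℂ →L[ℝ] Matrix n n ℂ :=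
    (LinearMap.mulRight ℝ B ∘ₗ LinearMap.mulLeft ℝ A).toContinuousLinearMap
  conj.integral_comp_comm hf

theorem integral_trace (hf : Integrable f ν) :
    ∫ x, (f x).trace ∂ν = (∫ x, f x ∂ν).trace :=
  ((traceLinearMap n ℂ ℂ).restrictScalars ℝ).toContinuousLinearMap.integral_comp_comm hf

end Integral

variable [DecidableEq n]

theorem span_unitaryGroup :
    Submodule.span ℂ (unitaryGroup n ℂ : Set (Matrix n n ℂ)) = ⊤ :=
  -- the operator norm only serves to invoke the C⋆-algebra result; the statement is norm-free
  letI := instCStarAlgebra (n := n)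
  CStarAlgebra.span_unitary (Matrix n n ℂ)

theorem mem_range_scalar_of_forall_commute_unitary {M : Matrix n n ℂ}
    (h : ∀ U ∈ unitaryGroup n ℂ, Commute U M) : M ∈ Set.range (scalar n) := by
  have hcentral : (⊤ : Submodule ℂ (Matrix n n ℂ)) ≤
      Subalgebra.toSubmodule (Subalgebra.centralizer ℂ {M}) := by
    rw [← span_unitaryGroup, Submodule.span_le]
    intro U hU
    exact (Subalgebra.mem_centralizer_iff ℂ).mpr fun _ hM => hM ▸ (h U hU).symm.eq
  exact mem_range_scalar_iff_commute_single'.mpr fun i j =>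
    ((Subalgebra.mem_centralizer_iff ℂ).mp (hcentral Submodule.mem_top) M rfl).symm

theorem eq_trace_div_card_smul_one_of_mem_range_scalar {K : Type*} [Field K] [CharZero K]
    {M : Matrix n n K} (hM : M ∈ Set.range (scalar n)) :
    M = (M.trace / Fintype.card n) • 1 := by
  obtain ⟨c, rfl⟩ := hM
  cases isEmpty_or_nonempty n
  · exact Subsingleton.elim _ _
  · rw [scalar_apply, trace_diagonal, Finset.sum_const, Finset.card_univ, nsmul_eq_mul,
      mul_div_cancel_left₀ _ (by simp), smul_one_eq_diagonal]

instance : CompactSpace (unitaryGroup n ℂ) := by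
  have hbox : IsCompact (Set.univ.pi fun _ => Set.univ.pi fun _ => Metric.closedBall 0 1 :
      Set (Matrix n n ℂ)) :=
    isCompact_univ_pi fun _ => isCompact_univ_pi fun _ => isCompact_closedBall 0 1
  refine isCompact_iff_compactSpace.mp <|
    hbox.of_isClosed_subset (isClosed_unitary (R := Matrix n n ℂ)) fun U hU => ?_
  simpa using fun i j => entry_norm_bound_of_unitary hU i j

section Twirl

variable [MeasurableSpace (unitaryGroup n ℂ)] (μ : Measure (unitaryGroup n ℂ)) (X : Matrix n n ℂ)

noncomputable def twirl : Matrix n n ℂ :=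
  ∫ U : unitaryGroup n ℂ, (U : Matrix n n ℂ) * X * (U : Matrix n n ℂ)ᴴ ∂μ

variable [BorelSpace (unitaryGroup n ℂ)]

theorem integrable_unitary_conj [IsFiniteMeasure μ] :
    Integrable (fun U : unitaryGroup n ℂ => (U : Matrix n n ℂ) * X * (U : Matrix n n ℂ)ᴴ) μ :=
  Continuous.integrable_of_hasCompactSupport (by fun_prop) (.of_compactSpace _)

theorem commute_twirl [IsFiniteMeasure μ] [μ.IsMulLeftInvariant] {V : Matrix n n ℂ}
    (hV : V ∈ unitaryGroup n ℂ) : Commute V (twirl μ X) := by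
  have hconj : V * twirl μ X * Vᴴ = twirl μ X := by
    calc V * twirl μ X * Vᴴ
        = ∫ U : unitaryGroup n ℂ, V * ((U : Matrix n n ℂ) * X * (U : Matrix n n ℂ)ᴴ) * Vᴴ ∂μ :=
          (integral_mul_mul (integrable_unitary_conj μ X) V Vᴴ).symm
      _ = ∫ U : unitaryGroup n ℂ,
            ((⟨V, hV⟩ * U : unitaryGroup n ℂ) : Matrix n n ℂ) * X *
              ((⟨V, hV⟩ * U : unitaryGroup n ℂ) : Matrix n n ℂ)ᴴ ∂μ := by
          simp [conjTranspose_mul, mul_assoc]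
      _ = twirl μ X := integral_mul_left_eq_self
          (fun U : unitaryGroup n ℂ => (U : Matrix n n ℂ) * X * (U : Matrix n n ℂ)ᴴ) _
  have hVV : Vᴴ * V = 1 := mem_unitaryGroup_iff'.mp hV
  calc V * twirl μ X = V * twirl μ X * Vᴴ * V := by rw [mul_assoc _ Vᴴ, hVV, mul_one]
    _ = twirl μ X * V := by rw [hconj]

theorem trace_twirl [IsProbabilityMeasure μ] : (twirl μ X).trace = X.trace := by
  have htrace (U : unitaryGroup n ℂ) : ((U : Matrix n n ℂ) * X * (U : Matrix n n ℂ)ᴴ).trace =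
      X.trace := by
    rw [trace_mul_cycle, ← star_eq_conjTranspose, mem_unitaryGroup_iff'.mp U.2, one_mul]
  rw [twirl, ← integral_trace (integrable_unitary_conj μ X)]
  simp only [htrace, integral_const, probReal_univ, one_smul]

end Twirl

end Matrix

theorem haar_average_conj_general (d : ℕ)
    (μ : Measure (Matrix.unitaryGroup (Fin d) ℂ))
    [μ.IsHaarMeasure] [IsProbabilityMeasure μ]
    (X : Matrix (Fin d) (Fin d) ℂ) :
    (∫ U : Matrix.unitaryGroup (Fin d) ℂ,
        (U : Matrix (Fin d) (Fin d) ℂ) * X * (U : Matrix (Fin d) (Fin d) ℂ)ᴴ ∂μ)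
      = (X.trace / (d : ℂ)) • (1 : Matrix (Fin d) (Fin d) ℂ) := by
  have hscalar : twirl μ X ∈ Set.range (scalar (Fin d)) :=
    mem_range_scalar_of_forall_commute_unitary fun _ hV => commute_twirl μ X hV
  rw [← twirl, eq_trace_div_card_smul_one_of_mem_range_scalar hscalar, trace_twirl,
    Fintype.card_fin]

/-- The Haar average of the unitary conjugations of a matrix `X`
is the completely depolarized operator `(tr X / d) • I`. -/
theorem haar_average_conj (d : ℕ) (hd : 1 ≤ d)
    (μ : Measure (Matrix.unitaryGroup (Fin d) ℂ))
    [μ.IsHaarMeasure] [IsProbabilityMeasure μ]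
    (X : Matrix (Fin d) (Fin d) ℂ) :
    (∫ U : Matrix.unitaryGroup (Fin d) ℂ,
        (U : Matrix (Fin d) (Fin d) ℂ) * X * (U : Matrix (Fin d) (Fin d) ℂ)ᴴ ∂μ)
      = (X.trace / (d : ℂ)) • (1 : Matrix (Fin d) (Fin d) ℂ) :=
  haar_average_conj_general d μ X
end

section
/- For every Hermitian d²×d² matrix X on ℂ^d ⊗ ℂ^d, the twirling average satisfies ∫_{U(d)} (U ⊗ U) X (U ⊗ U)† dU = (tr(X P₊)/d₊) · P₊ + (tr(X P₋)/d₋) · P₋, where the integral is the Bochner integral with respect to the normalized Haar measure on U(d). -/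
open MeasureTheory Matrix
open scoped Kronecker

/-- The swap operator `S` on `ℂ^d ⊗ ℂ^d`. -/
def swapOp (d : ℕ) : Matrix (Fin d × Fin d) (Fin d × Fin d) ℂ :=
  Matrix.of fun p q => if p.1 = q.2 ∧ p.2 = q.1 then 1 else 0

/-- The projector onto the symmetric subspace, `P₊ = (I + S)/2`. -/
noncomputable def Pplus (d : ℕ) : Matrix (Fin d × Fin d) (Fin d × Fin d) ℂ :=
  (2⁻¹ : ℂ) • (1 + swapOp d)

/-- The projector onto the antisymmetric subspace, `P₋ = (I - S)/2`. -/
noncomputable def Pminus (d : ℕ) : Matrix (Fin d × Fin d) (Fin d × Fin d) ℂ :=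
  (2⁻¹ : ℂ) • (1 - swapOp d)

/-!
Haar invariance makes the twirl `T` of `X` commute with every `U ⊗ U`. Testing this commutation
against diagonal phase unitaries, permutation matrices and a single Householder reflection shows
that the commutant of `{U ⊗ U}` is spanned by `1` and the swap `S`, i.e. by `P₊` and `P₋`. The
coefficients are then fixed by `tr (T P±) = tr (X P±)`, which holds because `P±` commute with
every `U ⊗ U`.
-/

instance {n : Type*} [Fintype n] [DecidableEq n] : CompactSpace (unitaryGroup n ℂ) := by
  have hK : IsCompact (Set.univ.pi fun _ : n => Set.univ.pi fun _ : n =>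
      Metric.closedBall (0 : ℂ) 1) :=
    isCompact_univ_pi fun _ => isCompact_univ_pi fun _ => isCompact_closedBall 0 1
  refine isCompact_iff_compactSpace.mp <| hK.of_isClosed_subset
    (isClosed_unitary (R := Matrix n n ℂ)) fun U hU i _ j _ => ?_
  simpa using entry_norm_bound_of_unitary hU i j

section Twirl

variable {G : Type*} [Group G] [MeasurableSpace G] {n : Type*} [Fintype n] [DecidableEq n]

noncomputable def twirl (ρ : G →* unitaryGroup n ℂ) (μ : Measure G) (X : Matrix n n ℂ) :
    Matrix n n ℂ :=
  ∫ g, (ρ g : Matrix n n ℂ) * X * (ρ g : Matrix n n ℂ)ᴴ ∂μ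

theorem mul_twirl_mul_conjTranspose [MeasurableMul G] (ρ : G →* unitaryGroup n ℂ)
    (μ : Measure G) [μ.IsMulLeftInvariant] (X : Matrix n n ℂ) (h : G) :
    (ρ h : Matrix n n ℂ) * twirl ρ μ X * (ρ h : Matrix n n ℂ)ᴴ = twirl ρ μ X := by
  let conj : Matrix n n ℂ ≃L[ℝ] Matrix n n ℂ :=
    ((Unitary.conjStarAlgAut ℂ _ (ρ h)).toAlgEquiv.toLinearEquiv.restrictScalars
      ℝ).toContinuousLinearEquiv
  calc (ρ h : Matrix n n ℂ) * twirl ρ μ X * (ρ h : Matrix n n ℂ)ᴴ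
        = conj (twirl ρ μ X) := rfl
    _ = ∫ g, conj ((ρ g : Matrix n n ℂ) * X * (ρ g : Matrix n n ℂ)ᴴ) ∂μ :=
      (conj.integral_comp_comm _).symm
    _ = ∫ g, (ρ (h * g) : Matrix n n ℂ) * X * (ρ (h * g) : Matrix n n ℂ)ᴴ ∂μ := by
      congr 1 with g
      simp [conj, Matrix.mul_assoc, star_eq_conjTranspose]
    _ = twirl ρ μ X :=
      integral_mul_left_eq_self
        (fun g => (ρ g : Matrix n n ℂ) * X * (ρ g : Matrix n n ℂ)ᴴ) h

theorem commute_twirl [MeasurableMul G] (ρ : G →* unitaryGroup n ℂ) (μ : Measure G)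
    [μ.IsMulLeftInvariant] (X : Matrix n n ℂ) (h : G) :
    Commute (ρ h : Matrix n n ℂ) (twirl ρ μ X) := by
  have hU : (ρ h : Matrix n n ℂ)ᴴ * ρ h = 1 := Unitary.coe_star_mul_self _
  calc (ρ h : Matrix n n ℂ) * twirl ρ μ X
      = (ρ h : Matrix n n ℂ) * twirl ρ μ X * ((ρ h : Matrix n n ℂ)ᴴ * ρ h) := by
        rw [hU, Matrix.mul_one]
    _ = twirl ρ μ X * ρ h := by rw [← Matrix.mul_assoc, mul_twirl_mul_conjTranspose]

theorem trace_conj_mul_of_commute {U P : Matrix n n ℂ} (hU : U ∈ unitaryGroup n ℂ)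
    (hP : Commute U P) (X : Matrix n n ℂ) : (U * X * Uᴴ * P).trace = (X * P).trace :=
  calc (U * X * Uᴴ * P).trace = (Uᴴ * (P * U) * X).trace := by
        rw [Matrix.mul_assoc (U * X), trace_mul_comm]; simp only [Matrix.mul_assoc]
    _ = (Uᴴ * U * (P * X)).trace := by rw [← hP.eq]; simp only [Matrix.mul_assoc]
    _ = (X * P).trace := by
        rw [← star_eq_conjTranspose, Unitary.star_mul_self_of_mem hU, Matrix.one_mul,
          trace_mul_comm]

theorem trace_twirl_mul [TopologicalSpace G] [OpensMeasurableSpace G] [CompactSpace G]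
    (ρ : G →* unitaryGroup n ℂ) (hρ : Continuous ρ) (μ : Measure G)
    [IsProbabilityMeasure μ] (X P : Matrix n n ℂ)
    (hP : ∀ g, Commute (ρ g : Matrix n n ℂ) P) :
    (twirl ρ μ X * P).trace = (X * P).trace := by
  let traceMulRight : Matrix n n ℂ →L[ℝ] ℂ :=
    ((traceLinearMap n ℂ ℂ).restrictScalars ℝ ∘ₗ
      LinearMap.mulRight ℝ P).toContinuousLinearMap
  have hc : Continuous fun g => (ρ g : Matrix n n ℂ) := continuous_subtype_val.comp hρ
  calc (twirl ρ μ X * P).trace = traceMulRight (twirl ρ μ X) := rfl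
    _ = ∫ g, traceMulRight ((ρ g : Matrix n n ℂ) * X * (ρ g : Matrix n n ℂ)ᴴ) ∂μ :=
      (traceMulRight.integral_comp_comm <|
        ((hc.matrix_mul continuous_const).matrix_mul
          hc.matrix_conjTranspose).integrable_of_hasCompactSupport (.of_compactSpace _)).symm
    _ = ∫ _, (X * P).trace ∂μ :=
      integral_congr_ae (.of_forall fun g => trace_conj_mul_of_commute (ρ g).2 (hP g) X)
    _ = (X * P).trace := by simp

end Twirl

section Monomial

variable {n : Type*} [DecidableEq n]

def phase (a : n) (x : n) : ℂ := if x = a then Complex.I else 1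

theorem diagonal_phase_mem_unitaryGroup [Fintype n] (a : n) :
    diagonal (phase a) ∈ unitaryGroup n ℂ := by
  rw [mem_unitaryGroup_iff, star_eq_conjTranspose, diagonal_conjTranspose, diagonal_mul_diagonal,
    ← diagonal_one]
  congr 1 with x
  by_cases hx : x = a <;> simp [phase, hx]

/-- `phase a x * phase a y` is `1`, `I` or `-1` according as none, one or both of `x, y`
equal `a`, so these products determine the multiset `{x, y}`. -/
theorem eq_or_eq_swap_of_phase_mul_eq {p q : n × n}
    (h : ∀ a, phase a p.1 * phase a p.2 = phase a q.1 * phase a q.2) : q = p ∨ q = p.swap := by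
  obtain ⟨x, y⟩ := p
  obtain ⟨z, w⟩ := q
  have hx := h x
  have hy := h y
  simp only [phase] at hx hy
  split_ifs at hx hy <;> simp [Complex.ext_iff] at hx hy ⊢ <;> grind

theorem permMatrix_kronecker_permMatrix (σ τ : Equiv.Perm n) :
    σ.permMatrix ℂ ⊗ₖ τ.permMatrix ℂ = Equiv.Perm.permMatrix ℂ (σ.prodCongr τ) := by
  ext p q
  by_cases h : σ p.1 = q.1 <;> simp [PEquiv.toMatrix_apply, Prod.ext_iff, h]

end Monomial

section Commutant

variable {n : Type*} [Fintype n] [DecidableEq n]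

def householder (v : n → ℂ) : Matrix n n ℂ :=
  1 - (2 : ℂ) • vecMulVec v (star v)

theorem householder_mem_unitaryGroup {v : n → ℂ} (hv : star v ⬝ᵥ v = 1) :
    householder v ∈ unitaryGroup n ℂ := by
  have hself : star (householder v) = householder v := by
    simp [householder, star_eq_conjTranspose]
  rw [mem_unitaryGroup_iff, hself, householder, sub_mul, mul_sub, mul_sub, smul_mul_smul,
    vecMulVec_mul_vecMulVec, hv, one_smul]
  simp only [Matrix.one_mul, Matrix.mul_one]
  module

theorem exists_mem_unitaryGroup_apply_ne_zero_and_apply_ne_zero {a b : n} (hab : a ≠ b) :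
    ∃ U ∈ unitaryGroup n ℂ, U a a ≠ 0 ∧ U b a ≠ 0 := by
  -- a unit vector with rational entries, so that no square roots appear
  let v : n → ℂ := Pi.single a (3 / 5) + Pi.single b (4 / 5)
  have hv : star v ⬝ᵥ v = 1 := by
    simp [v, hab, hab.symm]
    norm_num
  refine ⟨householder v, householder_mem_unitaryGroup hv, ?_, ?_⟩ <;>
    norm_num [householder, v, vecMulVec_apply, hab.symm]

theorem permMatrix_mem_unitaryGroup (σ : Equiv.Perm n) :
    σ.permMatrix ℂ ∈ unitaryGroup n ℂ := by
  rw [mem_unitaryGroup_iff, star_eq_conjTranspose, conjTranspose_permMatrix, ← permMatrix_mul,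
    inv_mul_cancel, permMatrix_one]

variable {M : Matrix (n × n) (n × n) ℂ}

theorem apply_eq_zero_of_forall_commute (hM : ∀ U ∈ unitaryGroup n ℂ, Commute (U ⊗ₖ U) M)
    {p q : n × n} (hqp : q ≠ p) (hqp' : q ≠ p.swap) : M p q = 0 := by
  by_contra hpq
  refine (eq_or_eq_swap_of_phase_mul_eq fun a => ?_).elim hqp hqp'
  have h := congrFun (congrFun (hM _ (diagonal_phase_mem_unitaryGroup a)).eq p) q
  rw [diagonal_kronecker_diagonal, diagonal_mul, mul_diagonal, mul_comm (M p q)] at h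
  exact mul_right_cancel₀ hpq h

theorem apply_perm_eq_of_forall_commute (hM : ∀ U ∈ unitaryGroup n ℂ, Commute (U ⊗ₖ U) M)
    (σ : Equiv.Perm n) (x y z w : n) : M (σ x, σ y) (σ z, σ w) = M (x, y) (z, w) := by
  have h := (hM _ (permMatrix_mem_unitaryGroup σ)).eq
  rw [permMatrix_kronecker_permMatrix, Equiv.Perm.permMatrix, PEquiv.toMatrix_toPEquiv_mul,
    PEquiv.mul_toMatrix_toPEquiv] at h
  simpa using congrFun (congrFun h (x, y)) (σ z, σ w)

theorem apply_diag_eq_of_forall_commute (hM : ∀ U ∈ unitaryGroup n ℂ, Commute (U ⊗ₖ U) M)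
    {a b : n} (hab : a ≠ b) : M (a, a) (a, a) = M (a, b) (a, b) + M (a, b) (b, a) := by
  obtain ⟨U, hU, haa, hba⟩ := exists_mem_unitaryGroup_apply_ne_zero_and_apply_ne_zero hab
  -- in the `((a, b), (a, a))` entry of `(U ⊗ U) M = M (U ⊗ U)` only `M (a, a) (a, a)` survives
  -- on the left and only `M (a, b) (a, b)`, `M (a, b) (b, a)` on the right
  have h := congrFun (congrFun (hM U hU).eq (a, b)) (a, a)
  simp only [mul_apply, kroneckerMap_apply] at h
  rw [Fintype.sum_eq_single (a, a), Fintype.sum_eq_add (a, b) (b, a)] at h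
  · have : U a a * U b a * (M (a, a) (a, a) - (M (a, b) (a, b) + M (a, b) (b, a))) = 0 := by
      linear_combination h
    simpa [sub_eq_zero, haa, hba] using this
  · simp [Prod.ext_iff, hab]
  · rintro r ⟨hr, hr'⟩
    rw [apply_eq_zero_of_forall_commute hM hr hr', zero_mul]
  · intro r hr
    rw [apply_eq_zero_of_forall_commute hM hr.symm
      fun h => hr (by rw [← Prod.swap_swap r, ← h]; rfl), mul_zero]

theorem apply_eq_of_forall_commute (hM : ∀ U ∈ unitaryGroup n ℂ, Commute (U ⊗ₖ U) M)
    {a b : n} (hab : a ≠ b) (p q : n × n) :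
    M p q = (if p = q then M (a, b) (a, b) else 0) +
      (if p = q.swap then M (a, b) (b, a) else 0) := by
  have hoff : ∀ x y, x ≠ y →
      M (x, y) (x, y) = M (a, b) (a, b) ∧ M (x, y) (y, x) = M (a, b) (b, a) := by
    intro x y hxy
    obtain ⟨σ, hσa, hσb⟩ :=
      MulAction.is_two_pretransitive_iff.mp (Equiv.Perm.isMultiplyPretransitive n 2) hab hxy
    rw [Equiv.Perm.smul_def] at hσa hσb
    subst hσa hσb
    exact ⟨apply_perm_eq_of_forall_commute hM σ .., apply_perm_eq_of_forall_commute hM σ ..⟩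
  have hdiag : ∀ x, M (x, x) (x, x) = M (a, b) (a, b) + M (a, b) (b, a) := by
    intro x
    rw [← apply_diag_eq_of_forall_commute hM hab]
    simpa using apply_perm_eq_of_forall_commute hM (Equiv.swap a x) a a a a
  obtain ⟨x, y⟩ := p
  by_cases hpq : q = (x, y)
  · subst hpq
    by_cases hxy : x = y
    · subst hxy
      simp [hdiag]
    · simp [(hoff x y hxy).1, Prod.ext_iff, hxy]
  by_cases hpq' : q = (y, x)
  · subst hpq'
    have hxy : x ≠ y := fun h => hpq (by rw [h])
    simp [(hoff x y hxy).2, Prod.ext_iff, hxy]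
  rw [apply_eq_zero_of_forall_commute hM hpq hpq', if_neg (Ne.symm hpq),
    if_neg fun h => hpq' (by rw [← Prod.swap_swap q, ← h]; rfl), add_zero]

end Commutant

section Swap

variable {d : ℕ}

theorem swapOp_eq_permMatrix :
    swapOp d = Equiv.Perm.permMatrix ℂ (Equiv.prodComm (Fin d) (Fin d)) := by
  ext p q
  simp [swapOp, PEquiv.toMatrix_apply, Prod.ext_iff, eq_comm, and_comm]

theorem swapOp_mul_swapOp : swapOp d * swapOp d = 1 := by
  rw [swapOp_eq_permMatrix, ← permMatrix_mul]
  convert permMatrix_one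
  ext <;> rfl

theorem trace_swapOp : (swapOp d).trace = d := by
  simp only [trace, diag, swapOp, of_apply, Fintype.sum_prod_type]
  simp [eq_comm]

theorem commute_swapOp_kronecker (A : Matrix (Fin d) (Fin d) ℂ) :
    Commute (swapOp d) (A ⊗ₖ A) := by
  rw [Commute, SemiconjBy, swapOp_eq_permMatrix, Equiv.Perm.permMatrix,
    PEquiv.toMatrix_toPEquiv_mul, PEquiv.mul_toMatrix_toPEquiv]
  ext p q
  simp [mul_comm]

theorem commute_Pplus_kronecker (A : Matrix (Fin d) (Fin d) ℂ) :
    Commute (Pplus d) (A ⊗ₖ A) :=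
  ((Commute.one_left _).add_left (commute_swapOp_kronecker A)).smul_left _

theorem commute_Pminus_kronecker (A : Matrix (Fin d) (Fin d) ℂ) :
    Commute (Pminus d) (A ⊗ₖ A) :=
  ((Commute.one_left _).sub_left (commute_swapOp_kronecker A)).smul_left _

theorem smul_one_add_smul_swapOp (β γ : ℂ) :
    β • 1 + γ • swapOp d = (β + γ) • Pplus d + (β - γ) • Pminus d := by
  simp only [Pplus, Pminus, smul_smul, smul_add, smul_sub]
  module

theorem trace_smul_one_add_smul_swapOp_mul_Pplus (β γ : ℂ) :
    ((β • 1 + γ • swapOp d) * Pplus d).trace = (β + γ) * (d * (d + 1) / 2) := by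
  simp only [Pplus, Matrix.mul_smul, Matrix.mul_add, Matrix.add_mul, Matrix.smul_mul,
    Matrix.one_mul, Matrix.mul_one, swapOp_mul_swapOp, trace_smul, trace_add, trace_one,
    trace_swapOp, Fintype.card_prod, Fintype.card_fin, smul_eq_mul]
  push_cast
  ring

theorem trace_smul_one_add_smul_swapOp_mul_Pminus (β γ : ℂ) :
    ((β • 1 + γ • swapOp d) * Pminus d).trace = (β - γ) * (d * (d - 1) / 2) := by
  simp only [Pminus, Matrix.mul_smul, Matrix.mul_sub, Matrix.add_mul, Matrix.smul_mul,
    Matrix.one_mul, Matrix.mul_one, swapOp_mul_swapOp, trace_smul, trace_add, trace_sub,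
    trace_one, trace_swapOp, Fintype.card_prod, Fintype.card_fin, smul_eq_mul]
  push_cast
  ring

theorem Pminus_eq_zero_of_le_one (hd : d ≤ 1) : Pminus d = 0 := by
  have : Subsingleton (Fin d) := Fin.subsingleton_iff_le_one.mpr hd
  have hS : swapOp d = 1 := by
    ext p q
    rw [Subsingleton.elim q p]
    simp [swapOp, Subsingleton.elim p.1 p.2]
  rw [Pminus, hS, sub_self, smul_zero]

theorem exists_eq_smul_one_add_smul_swapOp {M : Matrix (Fin d × Fin d) (Fin d × Fin d) ℂ}
    (hM : ∀ U ∈ unitaryGroup (Fin d) ℂ, Commute (U ⊗ₖ U) M) :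
    ∃ β γ : ℂ, M = β • 1 + γ • swapOp d := by
  rcases Nat.lt_or_ge d 2 with hd | hd
  · have : Subsingleton (Fin d) := Fin.subsingleton_iff_le_one.mpr (by omega)
    refine ⟨M.trace, 0, ?_⟩
    ext p q
    rw [Subsingleton.elim q p]
    simp [trace, Fintype.sum_subsingleton _ p]
  · let a : Fin d := ⟨0, by omega⟩
    let b : Fin d := ⟨1, by omega⟩
    refine ⟨M (a, b) (a, b), M (a, b) (b, a), ?_⟩
    ext p q
    rw [apply_eq_of_forall_commute hM (a := a) (b := b) (by simp [a, b, Fin.ext_iff]) p q]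
    simp [swapOp, one_apply, Prod.ext_iff]

theorem eq_trace_div_smul_Pplus_add_trace_div_smul_Pminus
    {M : Matrix (Fin d × Fin d) (Fin d × Fin d) ℂ} {β γ : ℂ}
    (hM : M = β • 1 + γ • swapOp d) :
    M = ((M * Pplus d).trace / ((d * (d + 1) : ℂ) / 2)) • Pplus d
      + ((M * Pminus d).trace / ((d * (d - 1) : ℂ) / 2)) • Pminus d := by
  rcases Nat.eq_zero_or_pos d with rfl | hd
  · ext ⟨i, _⟩
    exact i.elim0
  have hplus : (M * Pplus d).trace / ((d * (d + 1) : ℂ) / 2) = β + γ := by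
    rw [hM, trace_smul_one_add_smul_swapOp_mul_Pplus, mul_div_cancel_right₀]
    exact div_ne_zero (mul_ne_zero (by exact_mod_cast hd.ne') (by exact_mod_cast d.succ_ne_zero))
      two_ne_zero
  have hminus : ((M * Pminus d).trace / ((d * (d - 1) : ℂ) / 2)) • Pminus d =
      (β - γ) • Pminus d := by
    rcases Nat.lt_or_ge d 2 with hd1 | hd2
    · simp [Pminus_eq_zero_of_le_one (by omega : d ≤ 1)]
    · rw [hM, trace_smul_one_add_smul_swapOp_mul_Pminus, mul_div_cancel_right₀]
      exact div_ne_zero (mul_ne_zero (by exact_mod_cast hd.ne')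
        (sub_ne_zero.2 (by exact_mod_cast (by omega : d ≠ 1)))) two_ne_zero
  rw [hplus, hminus, hM, smul_one_add_smul_swapOp]

end Swap

theorem Continuous.matrix_kronecker {X R l m n p : Type*} [TopologicalSpace X]
    [TopologicalSpace R] [Mul R] [ContinuousMul R] {A : X → Matrix l m R}
    {B : X → Matrix n p R} (hA : Continuous A) (hB : Continuous B) :
    Continuous fun x => A x ⊗ₖ B x :=
  continuous_matrix fun i j => (hA.matrix_elem i.1 j.1).mul (hB.matrix_elem i.2 j.2)

def kroneckerSelf (n : Type*) [Fintype n] [DecidableEq n] :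
    unitaryGroup n ℂ →* unitaryGroup (n × n) ℂ where
  toFun U := ⟨(U : Matrix n n ℂ) ⊗ₖ (U : Matrix n n ℂ), kronecker_mem_unitary U.2 U.2⟩
  map_one' := Subtype.ext one_kronecker_one
  map_mul' U V := Subtype.ext <| by
    simp only [MulMemClass.coe_mul]
    exact mul_kronecker_mul _ _ _ _

theorem continuous_kroneckerSelf (n : Type*) [Fintype n] [DecidableEq n] :
    Continuous (kroneckerSelf n) :=
  (continuous_subtype_val.matrix_kronecker continuous_subtype_val).subtype_mk _

theorem twirling_average_general (d : ℕ)
    (μ : Measure (Matrix.unitaryGroup (Fin d) ℂ))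
    [μ.IsHaarMeasure] [IsProbabilityMeasure μ]
    (X : Matrix (Fin d × Fin d) (Fin d × Fin d) ℂ) :
    (∫ U : Matrix.unitaryGroup (Fin d) ℂ,
        ((U : Matrix (Fin d) (Fin d) ℂ) ⊗ₖ (U : Matrix (Fin d) (Fin d) ℂ)) * X *
          ((U : Matrix (Fin d) (Fin d) ℂ) ⊗ₖ (U : Matrix (Fin d) (Fin d) ℂ))ᴴ ∂μ)
      = ((X * Pplus d).trace / ((d * (d + 1) : ℂ) / 2)) • Pplus d
        + ((X * Pminus d).trace / ((d * (d - 1) : ℂ) / 2)) • Pminus d := by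
  change twirl (kroneckerSelf (Fin d)) μ X = _
  obtain ⟨β, γ, hβγ⟩ := exists_eq_smul_one_add_smul_swapOp fun U hU =>
    commute_twirl (kroneckerSelf (Fin d)) μ X ⟨U, hU⟩
  have htrace := trace_twirl_mul _ (continuous_kroneckerSelf (Fin d)) μ X
  rw [← htrace _ fun U => (commute_Pplus_kronecker _).symm,
    ← htrace _ fun U => (commute_Pminus_kronecker _).symm]
  exact eq_trace_div_smul_Pplus_add_trace_div_smul_Pminus hβγ

/-- For a Hermitian `X` on `ℂ^d ⊗ ℂ^d`, the twirling average is
`∫ (U⊗U) X (U⊗U)† dU = (tr(X P₊)/d₊) P₊ + (tr(X P₋)/d₋) P₋`. -/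
theorem twirling_average (d : ℕ) (hd : 1 ≤ d)
    (μ : Measure (Matrix.unitaryGroup (Fin d) ℂ))
    [μ.IsHaarMeasure] [IsProbabilityMeasure μ]
    (X : Matrix (Fin d × Fin d) (Fin d × Fin d) ℂ) (hX : X.IsHermitian) :
    (∫ U : Matrix.unitaryGroup (Fin d) ℂ,
        ((U : Matrix (Fin d) (Fin d) ℂ) ⊗ₖ (U : Matrix (Fin d) (Fin d) ℂ)) * X *
          ((U : Matrix (Fin d) (Fin d) ℂ) ⊗ₖ (U : Matrix (Fin d) (Fin d) ℂ))ᴴ ∂μ)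
      = ((X * Pplus d).trace / ((d * (d + 1) : ℂ) / 2)) • Pplus d
        + ((X * Pminus d).trace / ((d * (d - 1) : ℂ) / 2)) • Pminus d :=
  twirling_average_general d μ X
end

section
/- (Proposition 1) Suppose M_same, M_diff, M_? are positive semidefinite d⁴×d⁴ matrices with M_same + M_diff + M_? = ρᵀ ⊗ I_D for some density matrix ρ on ℂ^D (D = d²), and suppose the no-error conditions hold: tr(ω_{U⊗U} M_diff) = 0 for all U ∈ U(d) and tr(ω_{U⊗V} M_same) = 0 for all U, V ∈ U(d). Then M_same = 0 and tr(ω_T M_diff) = 0, where ω_T = ∫ ω_{U⊗U} dU; consequently M_? = ρᵀ ⊗ I_D − M_diff. -/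
open MeasureTheory Matrix
open scoped Kronecker ComplexOrder

/-- The unnormalized maximally entangled vector `|Ψ⁺⟩ = Σ_a e_a ⊗ e_a` on
`ℂ^D ⊗ ℂ^D` for `D = d²`. -/
def psiPlusVec (d : ℕ) : (Fin d × Fin d) × (Fin d × Fin d) → ℂ :=
  fun p => if p.1 = p.2 then 1 else 0

/-- The rank-one operator `Ψ⁺ = |Ψ⁺⟩⟨Ψ⁺|`. -/
noncomputable def psiPlus (d : ℕ) :
    Matrix ((Fin d × Fin d) × (Fin d × Fin d)) ((Fin d × Fin d) × (Fin d × Fin d)) ℂ :=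
  Matrix.vecMulVec (psiPlusVec d) (star (psiPlusVec d))

/-- Choi operator `ω_{U⊗V} = (I_D ⊗ (U ⊗ V)) Ψ⁺ (I_D ⊗ (U ⊗ V))†` of the product
channel `E_U ⊗ E_V`. -/
noncomputable def omegaUV (d : ℕ) (U V : Matrix (Fin d) (Fin d) ℂ) :
    Matrix ((Fin d × Fin d) × (Fin d × Fin d)) ((Fin d × Fin d) × (Fin d × Fin d)) ℂ :=
  ((1 : Matrix (Fin d × Fin d) (Fin d × Fin d) ℂ) ⊗ₖ (U ⊗ₖ V)) * psiPlus d *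
    ((1 : Matrix (Fin d × Fin d) (Fin d × Fin d) ℂ) ⊗ₖ (U ⊗ₖ V))ᴴ

/-!
For a positive semidefinite `M`, `tr(ω_{U⊗V} M)` is the quadratic form of `M` at the
vectorisation `vec (U ⊗ V)`, so the no-error condition for `M_same` puts every `vec (U ⊗ V)`
in the kernel of `M_same`. Unitaries span all matrices (each matrix is a combination of four
unitaries), hence the `U ⊗ V` span all matrices on `ℂ^d ⊗ ℂ^d`, and `M_same = 0`.
The trace functional `X ↦ tr(X M_diff)` commutes with the Haar integral, which gives
`tr(ω_T M_diff) = 0`; the last claim is the completeness relation with `M_same = 0`.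
-/

namespace Matrix

section Algebra

variable {l m n p R : Type*}

theorem trace_vecMulVec_mul [Fintype n] [CommSemiring R] (w v : n → R) (M : Matrix n n R) :
    (vecMulVec w v * M).trace = v ⬝ᵥ M *ᵥ w := by
  rw [vecMulVec_mul, trace_vecMulVec, dotProduct_comm, dotProduct_mulVec]

theorem mul_vecMulVec_star_mul_conjTranspose [Fintype n] [CommSemiring R] [StarRing R]
    (A : Matrix m n R) (w : n → R) :
    A * vecMulVec w (star w) * Aᴴ = vecMulVec (A *ᵥ w) (star (A *ᵥ w)) := by
  rw [mul_vecMulVec, vecMulVec_mul, star_mulVec]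

theorem span_image2_kronecker_eq_top [Fintype l] [Fintype m] [Fintype n] [Fintype p]
    [DecidableEq l] [DecidableEq m] [DecidableEq n] [DecidableEq p] [CommSemiring R]
    {s : Set (Matrix l m R)} {t : Set (Matrix n p R)}
    (hs : Submodule.span R s = ⊤) (ht : Submodule.span R t = ⊤) :
    Submodule.span R (Set.image2 (· ⊗ₖ ·) s t) = ⊤ := by
  have hsingle : Submodule.map₂ (kroneckerBilinear (R := R)) (Submodule.span R s)
      (Submodule.span R t) = ⊤ := by
    rw [hs, ht, eq_top_iff, ← (stdBasis R (l × n) (m × p)).span_eq, Submodule.span_le]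
    rintro _ ⟨⟨⟨a, c⟩, b, e⟩, rfl⟩
    rw [stdBasis_eq_single, ← mul_one (1 : R), ← single_kronecker_single]
    exact Submodule.apply_mem_map₂ _ Submodule.mem_top Submodule.mem_top
  exact (Submodule.map₂_span_span R (kroneckerBilinear (R := R)) s t).symm.trans hsingle

theorem PosSemidef.eq_zero_of_span_vec [Fintype m] [Fintype n] {𝕜 : Type*} [RCLike 𝕜]
    {M : Matrix (n × m) (n × m) 𝕜} (hM : M.PosSemidef) {s : Set (Matrix m n 𝕜)}
    (hs : Submodule.span 𝕜 s = ⊤)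
    (h : ∀ W ∈ s, star (vec W) ⬝ᵥ M *ᵥ vec W = 0) : M = 0 := by
  have hker (W : Matrix m n 𝕜) : M *ᵥ vec W = 0 := by
    induction (hs ▸ Submodule.mem_top : W ∈ Submodule.span 𝕜 s)
      using Submodule.span_induction with
    | mem W hW => exact (hM.dotProduct_mulVec_zero_iff _).1 (h W hW)
    | zero => rw [vec_zero, mulVec_zero]
    | add W W' _ _ hW hW' => rw [vec_add, mulVec_add, hW, hW', add_zero]
    | smul r W _ hW => rw [vec_smul, mulVec_smul, hW, smul_zero]
  refine ext_iff_mulVec.2 fun x => ?_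
  obtain ⟨W, rfl⟩ := vec_bijective.surjective x
  rw [hker, zero_mulVec]

end Algebra

variable {n : Type*} [Fintype n]

theorem span_unitaryGroup_eq_top [DecidableEq n] :
    Submodule.span ℂ (unitaryGroup n ℂ : Set (Matrix n n ℂ)) = ⊤ :=
  -- the operator-norm C⋆-structure; the span only sees the `ℂ`-module structure
  @CStarAlgebra.span_unitary (Matrix n n ℂ) instCStarAlgebra

theorem trace_integral_mul_eq_zero {α : Type*} [MeasurableSpace α] (μ : Measure α)
    {f : α → Matrix n n ℂ} {M : Matrix n n ℂ} (h : ∀ a, (f a * M).trace = 0) :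
    ((∫ a, f a ∂μ) * M).trace = 0 := by
  -- `Integrable` must be read in the Frobenius topology, which is not reducibly the product
  -- topology `instTopologicalSpaceMatrix` that instance search would find.
  let _ : TopologicalSpace (Matrix n n ℂ) :=
    matNormedAddCommGroup.toUniformSpace.toTopologicalSpace
  by_cases hf : Integrable f μ
  · let L := (traceLinearMap n ℝ ℂ ∘ₗ LinearMap.mulRight ℝ M).toContinuousLinearMap
    calc ((∫ a, f a ∂μ) * M).trace = L (∫ a, f a ∂μ) := rfl
      _ = ∫ a, L (f a) ∂μ := (L.integral_comp_comm hf).symm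
      _ = 0 := by simp [L, h]
  · rw [integral_undef hf, Matrix.zero_mul, trace_zero]

end Matrix

open Matrix

theorem psiPlusVec_eq_vec_one (d : ℕ) : psiPlusVec d = vec 1 := by
  ext ⟨p, q⟩
  simp [psiPlusVec, vec, one_apply, eq_comm]

theorem trace_omegaUV_mul (d : ℕ) (U V : Matrix (Fin d) (Fin d) ℂ)
    (M : Matrix ((Fin d × Fin d) × (Fin d × Fin d)) ((Fin d × Fin d) × (Fin d × Fin d)) ℂ) :
    (omegaUV d U V * M).trace = star (vec (U ⊗ₖ V)) ⬝ᵥ M *ᵥ vec (U ⊗ₖ V) := by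
  rw [omegaUV, psiPlus, mul_vecMulVec_star_mul_conjTranspose, psiPlusVec_eq_vec_one,
    ← vec_mul_eq_mulVec, Matrix.mul_one, trace_vecMulVec_mul]

theorem unambiguous_comparator_structure_general (d : ℕ)
    (μ : Measure (Matrix.unitaryGroup (Fin d) ℂ))
    (Msame Mdiff Mq : Matrix ((Fin d × Fin d) × (Fin d × Fin d))
      ((Fin d × Fin d) × (Fin d × Fin d)) ℂ)
    (hMsame : Msame.PosSemidef)
    (ρ : Matrix (Fin d × Fin d) (Fin d × Fin d) ℂ)
    (hsum : Msame + Mdiff + Mq =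
      ρᵀ ⊗ₖ (1 : Matrix (Fin d × Fin d) (Fin d × Fin d) ℂ))
    (hdiff : ∀ U : Matrix (Fin d) (Fin d) ℂ, U ∈ Matrix.unitaryGroup (Fin d) ℂ →
      (omegaUV d U U * Mdiff).trace = 0)
    (hsame : ∀ U V : Matrix (Fin d) (Fin d) ℂ, U ∈ Matrix.unitaryGroup (Fin d) ℂ →
      V ∈ Matrix.unitaryGroup (Fin d) ℂ → (omegaUV d U V * Msame).trace = 0) :
    Msame = 0 ∧
    (((∫ U : Matrix.unitaryGroup (Fin d) ℂ,
        omegaUV d (U : Matrix (Fin d) (Fin d) ℂ) (U : Matrix (Fin d) (Fin d) ℂ) ∂μ)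
      * Mdiff).trace = 0) ∧
    Mq = ρᵀ ⊗ₖ (1 : Matrix (Fin d × Fin d) (Fin d × Fin d) ℂ) - Mdiff := by
  have hMsame_zero : Msame = 0 := by
    refine hMsame.eq_zero_of_span_vec
      (span_image2_kronecker_eq_top span_unitaryGroup_eq_top span_unitaryGroup_eq_top) ?_
    rintro _ ⟨U, hU, V, hV, rfl⟩
    rw [← trace_omegaUV_mul]
    exact hsame U V hU hV
  refine ⟨hMsame_zero, trace_integral_mul_eq_zero μ fun U => hdiff U U.2, ?_⟩
  rw [hMsame_zero, zero_add] at hsum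
  exact eq_sub_of_add_eq' hsum

/-- **Proposition 1.** For an unambiguous comparator of unitary channels,
the no-error conditions force `M_same = 0`, `tr(ω_T M_diff) = 0` (where
`ω_T = ∫ ω_{U⊗U} dU`), and hence `M_? = ρᵀ ⊗ I_D - M_diff`. -/
theorem unambiguous_comparator_structure (d : ℕ) (hd : 2 ≤ d)
    (μ : Measure (Matrix.unitaryGroup (Fin d) ℂ))
    [μ.IsHaarMeasure] [IsProbabilityMeasure μ]
    (Msame Mdiff Mq : Matrix ((Fin d × Fin d) × (Fin d × Fin d))
      ((Fin d × Fin d) × (Fin d × Fin d)) ℂ)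
    (hMsame : Msame.PosSemidef) (hMdiff : Mdiff.PosSemidef) (hMq : Mq.PosSemidef)
    (ρ : Matrix (Fin d × Fin d) (Fin d × Fin d) ℂ)
    (hρ : ρ.PosSemidef) (hρtr : ρ.trace = 1)
    (hsum : Msame + Mdiff + Mq =
      ρᵀ ⊗ₖ (1 : Matrix (Fin d × Fin d) (Fin d × Fin d) ℂ))
    (hdiff : ∀ U : Matrix (Fin d) (Fin d) ℂ, U ∈ Matrix.unitaryGroup (Fin d) ℂ →
      (omegaUV d U U * Mdiff).trace = 0)
    (hsame : ∀ U V : Matrix (Fin d) (Fin d) ℂ, U ∈ Matrix.unitaryGroup (Fin d) ℂ →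
      V ∈ Matrix.unitaryGroup (Fin d) ℂ → (omegaUV d U V * Msame).trace = 0) :
    Msame = 0 ∧
    (((∫ U : Matrix.unitaryGroup (Fin d) ℂ,
        omegaUV d (U : Matrix (Fin d) (Fin d) ℂ) (U : Matrix (Fin d) (Fin d) ℂ) ∂μ)
      * Mdiff).trace = 0) ∧
    Mq = ρᵀ ⊗ₖ (1 : Matrix (Fin d × Fin d) (Fin d × Fin d) ℂ) - Mdiff :=
  unambiguous_comparator_structure_general d μ Msame Mdiff Mq hMsame ρ hsum hdiff hsame
end
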